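/- Well-typedness of the identity continuation: if id-cont-type τ μ τ′ holds in λF, then the λC term k_id = λv.λt. case t of () → v | k → k v () satisfies ∅ ⊢C k_id : ⟦τ⟧ → ⟦μ⟧ → ⟦τ′⟧. -/
import Mathlib


namespace LambdaF

/-! ## Syntax and operational semantics of λF -/

/-- λF expressions.  A constant `const ι n` is the `n`-th constant of base type `ι`. -/
inductive Tm : Type where
  | const : Nat → Nat → Tm
  | var : String → Tm
  | lam : String → Tm → Tm
  | app : Tm → Tm → Tm
  | control : String → Tm → Tm
  | prompt : Tm → Tm

/-- Values `v ::= c | x | λx.e`. -/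
inductive IsVal : Tm → Prop where
  | const (ι n : Nat) : IsVal (.const ι n)
  | var (x : String) : IsVal (.var x)
  | lam (x : String) (e : Tm) : IsVal (.lam x e)

/-- Substitution `e[x := v]`. -/
def subst : Tm → String → Tm → Tm
  | .const ι n, _, _ => .const ι n
  | .var y, x, v => if y = x then v else .var y
  | .lam y e, x, v => if y = x then .lam y e else .lam y (subst e x v)
  | .app e₁ e₂, x, v => .app (subst e₁ x v) (subst e₂ x v)
  | .control k e, x, v => if k = x then .control k e else .control k (subst e x v)
  | .prompt e, x, v => .prompt (subst e x v)

/-- All variable names occurring in a term (free or bound). -/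
def Tm.vars : Tm → List String
  | .const _ _ => []
  | .var y => [y]
  | .lam y e => y :: e.vars
  | .app e₁ e₂ => e₁.vars ++ e₂.vars
  | .control k e => k :: e.vars
  | .prompt e => e.vars

/-- Pure evaluation contexts `F ::= [] | F e | v F`. -/
inductive PCtx : Type where
  | hole : PCtx
  | appL : PCtx → Tm → PCtx
  | appR : Tm → PCtx → PCtx

/-- Plugging an expression into a pure context. -/
def PCtx.plug : PCtx → Tm → Tm
  | .hole, e => e
  | .appL P e₂, e => .app (P.plug e) e₂
  | .appR v P, e => .app v (P.plug e)

/-- Well-formedness of pure contexts: in `v F`, `v` is a value. -/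
inductive PCtx.Wf : PCtx → Prop where
  | hole : PCtx.Wf .hole
  | appL (P : PCtx) (e : Tm) : PCtx.Wf P → PCtx.Wf (.appL P e)
  | appR (v : Tm) (P : PCtx) : IsVal v → PCtx.Wf P → PCtx.Wf (.appR v P)

/-- All variable names occurring in a pure context. -/
def PCtx.vars : PCtx → List String
  | .hole => []
  | .appL P e => P.vars ++ e.vars
  | .appR v P => v.vars ++ P.vars

/-- General evaluation contexts `E ::= [] | E e | v E | ⟨E⟩`. -/
inductive ECtx : Type where
  | hole : ECtx
  | appL : ECtx → Tm → ECtx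
  | appR : Tm → ECtx → ECtx
  | prompt : ECtx → ECtx

/-- Plugging an expression into a general context. -/
def ECtx.plug : ECtx → Tm → Tm
  | .hole, e => e
  | .appL E e₂, e => .app (E.plug e) e₂
  | .appR v E, e => .app v (E.plug e)
  | .prompt E, e => .prompt (E.plug e)

/-- Well-formedness of general contexts: in `v E`, `v` is a value. -/
inductive ECtx.Wf : ECtx → Prop where
  | hole : ECtx.Wf .hole
  | appL (E : ECtx) (e : Tm) : ECtx.Wf E → ECtx.Wf (.appL E e)
  | appR (v : Tm) (E : ECtx) : IsVal v → ECtx.Wf E → ECtx.Wf (.appR v E)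
  | prompt (E : ECtx) : ECtx.Wf E → ECtx.Wf (.prompt E)

/-- Reduction of λF. -/
inductive Step : Tm → Tm → Prop where
  | beta (E : ECtx) (x : String) (e v : Tm) :
      E.Wf → IsVal v →
      Step (E.plug (.app (.lam x e) v)) (E.plug (subst e x v))
  | control (E : ECtx) (P : PCtx) (k : String) (e : Tm) (x : String) :
      E.Wf → P.Wf → x ∉ P.vars →
      Step (E.plug (.prompt (P.plug (.control k e))))
           (E.plug (.prompt (subst e k (.lam x (P.plug (.var x))))))
  | prompt (E : ECtx) (v : Tm) :
      E.Wf → IsVal v →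
      Step (E.plug (.prompt v)) (E.plug v)

/-- Reflexive transitive closure of reduction. -/
def Steps : Tm → Tm → Prop := Relation.ReflTransGen Step

/-! ## Types and the (original) type system of λF -/

mutual
/-- λF expression types `τ ::= ι | (τ₁ → τ₂ @ μα α μβ β)`. -/
inductive Ty : Type where
  | base : Nat → Ty
  | arrow : Ty → Ty → Tr → Ty → Tr → Ty → Ty

/-- λF trail types `μ ::= • | (τ ⇒⟨μ⟩ τ′)`. -/
inductive Tr : Type where
  | empty : Tr
  | cons : Ty → Tr → Ty → Tr
end

/-- `id-cont-type τ μ τ′`. -/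
def IdContType : Ty → Tr → Ty → Prop
  | τ, .empty, τ' => τ = τ'
  | τ, .cons τ₁ μ₁ τ₁', τ' => τ = τ₁ ∧ τ' = τ₁' ∧ μ₁ = .empty

/-- `compatible μ₁ μ₂ μ₃`. -/
inductive Compatible : Tr → Tr → Tr → Prop where
  | empty (μ : Tr) : Compatible .empty μ μ
  | consEmpty (τ₁ : Ty) (μ₁ : Tr) (τ₁' : Ty) :
      Compatible (.cons τ₁ μ₁ τ₁') .empty (.cons τ₁ μ₁ τ₁')
  | consCons (τ₁ : Ty) (μ₁ : Tr) (τ₁' : Ty) (μ₂ μ₃ : Tr) :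
      Compatible μ₂ μ₃ μ₁ →
      Compatible (.cons τ₁ μ₁ τ₁') μ₂ (.cons τ₁ μ₃ τ₁')

/-- Typing contexts. -/
abbrev Ctx := List (String × Ty)

/-- Context lookup (with shadowing). -/
inductive Lookup : Ctx → String → Ty → Prop where
  | here (Γ : Ctx) (x : String) (τ : Ty) : Lookup ((x, τ) :: Γ) x τ
  | there (Γ : Ctx) (x y : String) (τ τ' : Ty) :
      x ≠ y → Lookup Γ x τ → Lookup ((y, τ') :: Γ) x τ

/-- The typing judgment `Γ ⊢ e : τ @ μα α / μβ β` of λF. -/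
inductive HasType : Ctx → Tm → Ty → Tr → Ty → Tr → Ty → Prop where
  | const (Γ : Ctx) (ι n : Nat) (μα : Tr) (α : Ty) :
      HasType Γ (.const ι n) (.base ι) μα α μα α
  | var (Γ : Ctx) (x : String) (τ : Ty) (μα : Tr) (α : Ty) :
      Lookup Γ x τ →
      HasType Γ (.var x) τ μα α μα α
  | abs (Γ : Ctx) (x : String) (e : Tm) (τ₁ τ₂ : Ty) (μα : Tr) (α : Ty)
      (μβ : Tr) (β : Ty) (μγ : Tr) (γ : Ty) :
      HasType ((x, τ₁) :: Γ) e τ₂ μα α μβ β →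
      HasType Γ (.lam x e) (.arrow τ₁ τ₂ μα α μβ β) μγ γ μγ γ
  | app (Γ : Ctx) (e₁ e₂ : Tm) (τ₁ τ₂ : Ty) (μα : Tr) (α : Ty) (μβ : Tr) (β : Ty)
      (μγ : Tr) (γ : Ty) (μδ : Tr) (δ : Ty) :
      HasType Γ e₁ (.arrow τ₁ τ₂ μα α μβ β) μγ γ μδ δ →
      HasType Γ e₂ τ₁ μβ β μγ γ →
      HasType Γ (.app e₁ e₂) τ₂ μα α μδ δ
  | control (Γ : Ctx) (k : String) (e : Tm) (τ τ₁ : Ty) (μ₁ : Tr) (τ₁' : Ty)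
      (μ₂ μ₀ : Tr) (α β γ : Ty) (μi : Tr) (γ' : Ty) (μα μβ : Tr) :
      HasType ((k, .arrow τ τ₁ μ₁ τ₁' μ₂ α) :: Γ) e γ μi γ' .empty β →
      IdContType γ μi γ' →
      Compatible (.cons τ₁ μ₁ τ₁') μ₂ μ₀ →
      Compatible μβ μ₀ μα →
      HasType Γ (.control k e) τ μα α μβ β
  | prompt (Γ : Ctx) (e : Tm) (τ β' : Ty) (μi : Tr) (β'' : Ty) (μα : Tr) (α : Ty) :
      HasType Γ e β' μi β'' .empty τ →
      IdContType β' μi β'' →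
      HasType Γ (.prompt e) τ μα α μα α

/-! ## The target calculus λC -/

/-- λC variables: either a λF source variable, or a generated variable
    identified by a pair of numbers (level, slot). -/
abbrev CVar := Sum String (Nat × Nat)

/-- The generated λC variable at level `n`, slot `i`. -/
def gv (n i : Nat) : CVar := Sum.inr (n, i)

/-- λC expressions, with a unit value `()` and a trail-case construct
    `case t of () → e₁ | k → e₂` (binding `k` in `e₂`). -/
inductive CTm : Type where
  | const : Nat → Nat → CTm
  | cvar : CVar → CTm
  | clam : CVar → CTm → CTm
  | capp : CTm → CTm → CTm
  | unit : CTm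
  | ccase : CTm → CTm → CVar → CTm → CTm

/-- Substitution on λC expressions. -/
def substC : CTm → CVar → CTm → CTm
  | .const ι n, _, _ => .const ι n
  | .cvar y, x, v => if y = x then v else .cvar y
  | .clam y e, x, v => if y = x then .clam y e else .clam y (substC e x v)
  | .capp e₁ e₂, x, v => .capp (substC e₁ x v) (substC e₂ x v)
  | .unit, _, _ => .unit
  | .ccase t e₁ k e₂, x, v =>
      .ccase (substC t x v) (substC e₁ x v) k (if k = x then e₂ else substC e₂ x v)

/-- λC types `σ ::= ι | σ → σ | •`. -/
inductive CTy : Type where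
  | base : Nat → CTy
  | arrow : CTy → CTy → CTy
  | unit : CTy

/-- λC typing contexts. -/
abbrev CCtx := List (CVar × CTy)

/-- λC context lookup (with shadowing). -/
inductive CLookup : CCtx → CVar → CTy → Prop where
  | here (Γ : CCtx) (x : CVar) (σ : CTy) : CLookup ((x, σ) :: Γ) x σ
  | there (Γ : CCtx) (x y : CVar) (σ σ' : CTy) :
      x ≠ y → CLookup Γ x σ → CLookup ((y, σ') :: Γ) x σ

/-- The typing judgment `Γ ⊢C e : σ` of λC.  In the `ccase` rule, the first
    branch is typed under the equality assumption that the scrutinee's type is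
    `•`, and the second branch under the assumptions that `k` has the
    scrutinee's type and that this type is a function type. -/
inductive HasTypeC : CCtx → CTm → CTy → Prop where
  | const (Γ : CCtx) (ι n : Nat) : HasTypeC Γ (.const ι n) (.base ι)
  | var (Γ : CCtx) (x : CVar) (σ : CTy) :
      CLookup Γ x σ → HasTypeC Γ (.cvar x) σ
  | lam (Γ : CCtx) (x : CVar) (e : CTm) (σ₁ σ₂ : CTy) :
      HasTypeC ((x, σ₁) :: Γ) e σ₂ →
      HasTypeC Γ (.clam x e) (.arrow σ₁ σ₂)
  | app (Γ : CCtx) (e₁ e₂ : CTm) (σ₁ σ₂ : CTy) :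
      HasTypeC Γ e₁ (.arrow σ₁ σ₂) → HasTypeC Γ e₂ σ₁ →
      HasTypeC Γ (.capp e₁ e₂) σ₂
  | unit (Γ : CCtx) : HasTypeC Γ .unit .unit
  | ccase (Γ : CCtx) (t e₁ : CTm) (k : CVar) (e₂ : CTm) (σ ρ : CTy) :
      HasTypeC Γ t σ →
      (σ = .unit → HasTypeC Γ e₁ ρ) →
      (∀ σ₁ σ₂, σ = .arrow σ₁ σ₂ → HasTypeC ((k, σ) :: Γ) e₂ ρ) →
      HasTypeC Γ (.ccase t e₁ k e₂) ρ

/-- The identity continuation `k_id = λv.λt. case t of () → v | k → k v ()`. -/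
def kidTm : CTm :=
  .clam (gv 0 13) (.clam (gv 0 14)
    (.ccase (.cvar (gv 0 14)) (.cvar (gv 0 13)) (gv 0 15)
      (.capp (.capp (.cvar (gv 0 15)) (.cvar (gv 0 13))) .unit)))

/-! ## CPS translation of λF types, and the trail operations of λC -/

mutual
/-- CPS translation of λF expression types. -/
def cpsTy : Ty → CTy
  | .base ι => .base ι
  | .arrow τ₁ τ₂ μα α μβ β =>
      .arrow (cpsTy τ₁)
        (.arrow (.arrow (cpsTy τ₂) (.arrow (cpsTr μα) (cpsTy α)))
          (.arrow (cpsTr μβ) (cpsTy β)))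

/-- CPS translation of λF trail types. -/
def cpsTr : Tr → CTy
  | .empty => .unit
  | .cons τ μ τ' => .arrow (cpsTy τ) (.arrow (cpsTr μ) (cpsTy τ'))
end

/-- Size of a trail type. -/
def Tr.size : Tr → Nat
  | .empty => 0
  | .cons _ μ _ => μ.size + 1

/-- The trail-cons operation
    `k :: t = case t of () → k | k′ → λv.λt′. k v (k′ :: t′)`,
    defined by recursion on trail types: `consTm μA μB μC m k t` is the body of
    `k :: t` when `k` expects a trail of type `μA`, `t` has trail type `μB`,
    and the result has trail type `μC` (level `m` is used to generate fresh
    variable names).  In the branches that the trail types rule out, the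
    (dead) recursive occurrence `k′ :: t′` is truncated. -/
def consTm : Tr → Tr → Tr → Nat → CTm → CTm → CTm
  | μA, .cons _ μB' _, .cons _ μC' _, m, k, t =>
      .ccase t k (gv m 10)
        (.clam (gv m 11) (.clam (gv m 12)
          (.capp (.capp k (.cvar (gv m 11)))
            (consTm μB' μC' μA (m + 1) (.cvar (gv m 10)) (.cvar (gv m 12))))))
  | _, _, _, m, k, t =>
      .ccase t k (gv m 10)
        (.clam (gv m 11) (.clam (gv m 12)
          (.capp (.capp k (.cvar (gv m 11))) (.cvar (gv m 12)))))
termination_by μA μB μC _ _ _ => μA.size + μB.size + μC.size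
decreasing_by simp [Tr.size]; omega

/-- The trail-append operation `t @ t′ = case t of () → t′ | k → k :: t′`:
    `appendTm μ₁ μ₂ μ₃ m t t′` is the body of `t @ t′` when `t : μ₁`,
    `t′ : μ₂` and the result has trail type `μ₃`. -/
def appendTm : Tr → Tr → Tr → Nat → CTm → CTm → CTm
  | .empty, _, _, m, t, t' => .ccase t t' (gv m 10) (.cvar (gv m 10))
  | .cons _ μ₁' _, μ₂, μ₃, m, t, t' =>
      .ccase t t' (gv m 10) (consTm μ₁' μ₂ μ₃ (m + 1) (.cvar (gv m 10)) t')

/-- **Well-typedness of the identity continuation**: if `id-cont-type τ μ τ′`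
    holds in λF, then `∅ ⊢C k_id : ⟦τ⟧ → ⟦μ⟧ → ⟦τ′⟧`. -/
theorem kid_well_typed (τ : Ty) (μ : Tr) (τ' : Ty) (h : IdContType τ μ τ') :
    HasTypeC [] kidTm (.arrow (cpsTy τ) (.arrow (cpsTr μ) (cpsTy τ'))) := by
  cases μ with
  | empty =>
    obtain rfl : τ = τ' := h
    apply HasTypeC.lam
    apply HasTypeC.lam
    apply HasTypeC.ccase _ _ _ _ _ .unit
    · exact .var _ _ _ (.here _ _ _)
    · intro _
      exact .var _ _ _ (.there _ _ _ _ _ (by decide) (.here _ _ _))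
    · intro σ₁ σ₂ h'; cases h'
  | cons τ₁ μ₁ τ₁' =>
    obtain ⟨rfl, rfl, rfl⟩ := h
    apply HasTypeC.lam
    apply HasTypeC.lam
    apply HasTypeC.ccase _ _ _ _ _ (cpsTr (.cons τ .empty τ'))
    · exact .var _ _ _ (.here _ _ _)
    · intro h'; simp [cpsTr] at h'
    · intro σ₁ σ₂ _
      apply HasTypeC.app _ _ _ CTy.unit
      · apply HasTypeC.app _ _ _ (cpsTy τ)
        · exact .var _ _ _ (.here _ _ _)
        · exact .var _ _ _ (.there _ _ _ _ _ (by decide)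
            (.there _ _ _ _ _ (by decide) (.here _ _ _)))
      · exact .unit _

end LambdaF
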